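/- arXiv:1305.6851 — 2 statements merged into one kernel-verified Lean document; each statement's English description precedes it below -/
import Mathlib

section
/- Let E = ℝ², α nonzero linear, e ∈ E with α(e) = 1, G = {x | α(x) ≠ 0} with product x·z = α(z) • (x − e) + z. Then for x ∈ G with α(x) ≠ 1 and every n ∈ ℕ, the n-th power of x in the group (G,e) equals ((α(x)^n − 1)/(α(x) − 1)) • x + ((α(x) − α(x)^n)/(α(x) − 1)) • e. -/
theorem stmt_16 (α : (Fin 2 → ℝ) →ₗ[ℝ] ℝ) (hα : α ≠ 0)
    (e : Fin 2 → ℝ) (he : α e = 1)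
    (mul : (Fin 2 → ℝ) → (Fin 2 → ℝ) → (Fin 2 → ℝ))
    (hmul : ∀ x z, mul x z = α z • (x - e) + z)
    (x : Fin 2 → ℝ) (hx : α x ≠ 0) (hx1 : α x ≠ 1)
    (p : ℕ → (Fin 2 → ℝ)) (hp0 : p 0 = e) (hps : ∀ n, p (n + 1) = mul x (p n)) :
    ∀ n : ℕ, p n = ((α x ^ n - 1) / (α x - 1)) • x + ((α x - α x ^ n) / (α x - 1)) • e := by
  have hd : α x - 1 ≠ 0 := sub_ne_zero.mpr hx1
  intro n
  induction n with
  | zero =>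
    rw [hp0]
    have : ((α x ^ 0 - 1) / (α x - 1)) = 0 := by simp
    rw [this]
    have : ((α x - α x ^ 0) / (α x - 1)) = 1 := by field_simp
    rw [this]
    simp
  | succ n ih =>
    rw [hps, hmul, ih]
    have hα' : α (((α x ^ n - 1) / (α x - 1)) • x + ((α x - α x ^ n) / (α x - 1)) • e)
        = α x ^ n := by
      simp only [map_add, map_smul, he, smul_eq_mul, mul_one]
      field_simp
      ring
    rw [hα']
    have h1 : (α x ^ (n + 1) - 1) / (α x - 1)
        = α x ^ n + (α x ^ n - 1) / (α x - 1) := by field_simp; ring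
    have h2 : (α x - α x ^ (n + 1)) / (α x - 1)
        = -(α x ^ n) + (α x - α x ^ n) / (α x - 1) := by field_simp; ring
    rw [h1, h2]
    module
end

section
/- Let p, q ∈ ℕ, A a fixed p×q real matrix, and G = {X ∈ M(q×p, ℝ) | AX invertible} with ternary law (XYZ) = (X − Y)(AY)⁻¹(AZ) + Z. Then G is a torsor: (XYY) = X = (YYX) for all X, Y ∈ G, and (X O (U P V)) = ((X O U) P V) for all X, O, U, P, V ∈ G. -/
theorem stmt_19 (p q : ℕ) (A : Matrix (Fin p) (Fin q) ℝ)
    (T : Matrix (Fin q) (Fin p) ℝ → Matrix (Fin q) (Fin p) ℝ →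
      Matrix (Fin q) (Fin p) ℝ → Matrix (Fin q) (Fin p) ℝ)
    (hT : ∀ X Y Z, T X Y Z = (X - Y) * (A * Y)⁻¹ * (A * Z) + Z) :
    (∀ X Y : Matrix (Fin q) (Fin p) ℝ, IsUnit (A * X) → IsUnit (A * Y) →
      T X Y Y = X ∧ T Y Y X = X) ∧
    (∀ X O U P V : Matrix (Fin q) (Fin p) ℝ,
      IsUnit (A * X) → IsUnit (A * O) → IsUnit (A * U) →
      IsUnit (A * P) → IsUnit (A * V) →
      T X O (T U P V) = T (T X O U) P V) := by
  constructor
  · intro X Y hX hY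
    constructor
    · rw [hT, Matrix.mul_assoc,
        Matrix.nonsing_inv_mul _ ((Matrix.isUnit_iff_isUnit_det _).mp hY),
        Matrix.mul_one, sub_add_cancel]
    · rw [hT, sub_self, Matrix.zero_mul, Matrix.zero_mul, zero_add]
  · intro X O U P V hX hO hU hP hV
    have hPP : A * P * (A * P)⁻¹ = 1 :=
      Matrix.mul_nonsing_inv _ ((Matrix.isUnit_iff_isUnit_det _).mp hP)
    have hcan : ∀ N : Matrix (Fin p) (Fin p) ℝ,
        A * (P * ((A * P)⁻¹ * N)) = N := by
      intro N
      rw [← Matrix.mul_assoc, ← Matrix.mul_assoc, hPP, Matrix.one_mul]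
    simp only [hT, Matrix.mul_add, Matrix.add_mul, Matrix.sub_mul, Matrix.mul_sub,
      Matrix.mul_assoc, hcan]
    abel
end
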